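/- The singular value function is submultiplicative: for all s ≥ 0 and all d×d real matrices A, B, φ^s(AB) ≤ φ^s(A)φ^s(B). -/

import Mathlib

open Filter Topology

noncomputable def opNorm {n : Type*} [Fintype n] [DecidableEq n] (A : Matrix n n ℝ) : ℝ :=
  ‖Matrix.toEuclideanCLM (𝕜 := ℝ) A‖

noncomputable def specRad {n : Type*} [Fintype n] [DecidableEq n] (B : Matrix n n ℝ) : ℝ :=
  sSup {r : ℝ | ∃ μ ∈ spectrum ℂ (B.map (fun x => (x : ℂ))), r = ‖μ‖}

noncomputable def singularValues {d : ℕ} (A : Matrix (Fin d) (Fin d) ℝ) : Fin d → ℝ :=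
  fun i => Real.sqrt ((Matrix.isHermitian_iff_isSymm.mpr (Matrix.isSymm_transpose_mul_self A)).eigenvalues
    (Tuple.sort (fun j => -((Matrix.isHermitian_iff_isSymm.mpr (Matrix.isSymm_transpose_mul_self A)).eigenvalues j)) i))

noncomputable def svf {d : ℕ} (A : Matrix (Fin d) (Fin d) ℝ) (s : ℝ) : ℝ :=
  if s < d then
    ∏ i : Fin d,
      if (i : ℤ) < ⌊s⌋ then singularValues A i
      else if (i : ℤ) = ⌊s⌋ then singularValues A i ^ (s - (⌊s⌋ : ℝ)) else 1
  else |A.det| ^ (s / d)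

def IsGenPerm {n : Type*} [Fintype n] (A : Matrix n n ℝ) : Prop :=
  (∀ i, ∃! j, A i j ≠ 0) ∧ (∀ j, ∃! i, A i j ≠ 0)

abbrev SIdx (d k : ℕ) := {p : Finset (Fin d) × Fin d // p.1.card = k ∧ p.2 ∉ p.1}

noncomputable def Pmat {d : ℕ} (s : ℝ) (k : ℕ) (π : Equiv.Perm (Fin d)) (a : Fin d → ℝ) :
    Matrix (SIdx d k) (SIdx d k) ℝ :=
  fun q p =>
    if q.1.1 = p.1.1.image π ∧ q.1.2 = π p.1.2 then
      (∏ j ∈ p.1.1, |a j|) * |a p.1.2| ^ (s - (k : ℝ))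
    else 0

noncomputable def pressure {d N : ℕ} (A : Fin N → Matrix (Fin d) (Fin d) ℝ) (s : ℝ) : ℝ :=
  ⨅ n : ℕ, (1 / ((n : ℝ) + 1)) *
    Real.log (∑ f : Fin (n + 1) → Fin N, svf ((List.ofFn fun m => A (f m)).prod) s)

/-!
For `k ≤ d`, the product of the `k` largest singular values of `A` is the operator norm of the
`k`-th compound matrix `C_k(A)` (the matrix of `k × k` minors): the Cauchy–Binet formula makes
`C_k` multiplicative and compatible with transposes, so `‖C_k(A)‖² = ‖C_k(AᵀA)‖`, and compounding
a diagonalisation `AᵀA = U D Uᵀ` gives an orthogonal conjugate of the diagonal matrix of products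
of `k` eigenvalues, whose norm is the largest such product. Multiplicativity of `C_k` then makes
`φ^k` submultiplicative. For `k ≤ s < k + 1 ≤ d`, `φ^s = (φ^k)^(1-θ) (φ^(k+1))^θ` with
`θ = s - k`, and for `s ≥ d` the claim is the multiplicativity of the determinant.
-/

open Matrix Finset

abbrev KSubset (ι : Type*) (k : ℕ) := {S : Finset ι // S.card = k}

namespace KSubset

variable {ι : Type*} [LinearOrder ι] {k : ℕ}

noncomputable def orderEmb (S : KSubset ι k) : Fin k ↪o ι := S.1.orderEmbOfFin S.2

lemma range_orderEmb (S : KSubset ι k) : Set.range S.orderEmb = S.1 :=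
  range_orderEmbOfFin _ _

lemma orderEmb_mem (S : KSubset ι k) (j : Fin k) : S.orderEmb j ∈ S.1 :=
  orderEmbOfFin_mem _ _ _

lemma exists_orderEmb_eq (S : KSubset ι k) {i : ι} (hi : i ∈ S.1) : ∃ j, S.orderEmb j = i := by
  rwa [← Finset.mem_coe, ← range_orderEmb, Set.mem_range] at hi

lemma prod_orderEmb {M : Type*} [CommMonoid M] (S : KSubset ι k) (f : ι → M) :
    ∏ j, f (S.orderEmb j) = ∏ i ∈ S.1, f i := by
  have himage : univ.image S.orderEmb = S.1 := by
    rw [← coe_inj, coe_image, coe_univ, Set.image_univ, range_orderEmb]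
  rw [← himage, prod_image fun a _ b _ h => S.orderEmb.injective h]

lemma val_le_orderEmb {d : ℕ} (S : KSubset (Fin d) k) (j : Fin k) : (j : ℕ) ≤ S.orderEmb j := by
  -- `S.orderEmb` maps `Iic j`, of size `j + 1`, injectively into `Iic (S.orderEmb j)`.
  simpa using card_le_card_of_injOn (s := Iic j) (t := Iic (S.orderEmb j)) S.orderEmb
    (fun i hi => by simpa using S.orderEmb.monotone (mem_Iic.1 hi)) S.orderEmb.injective.injOn

noncomputable def prodPermEquivInjective :
    KSubset ι k × Equiv.Perm (Fin k) ≃ {f : Fin k → ι // Function.Injective f} :=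
  Equiv.ofBijective (fun p => ⟨p.1.orderEmb ∘ p.2, p.1.orderEmb.injective.comp p.2.injective⟩) <| by
    constructor
    · rintro ⟨S, π⟩ ⟨S', π'⟩ h
      have hcomp : S.orderEmb ∘ π = S'.orderEmb ∘ π' := congrArg Subtype.val h
      obtain rfl : S = S' := by
        apply Subtype.ext
        rw [← coe_inj, ← range_orderEmb, ← range_orderEmb, ← EquivLike.range_comp _ π,
          hcomp, EquivLike.range_comp]
      obtain rfl : π = π' := Equiv.ext fun i => S.orderEmb.injective (congrFun hcomp i)
      rfl
    · rintro ⟨f, hf⟩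
      let S : KSubset ι k := ⟨univ.image f, by rw [card_image_of_injective _ hf, card_fin]⟩
      choose g hg using fun i => S.exists_orderEmb_eq (mem_image_of_mem f (mem_univ i))
      have hg_inj : Function.Injective g :=
        .of_comp (f := S.orderEmb) (by simpa [Function.comp_def, hg] using hf)
      exact ⟨(S, Equiv.ofBijective g (Finite.injective_iff_bijective.mp hg_inj)),
        Subtype.ext (funext hg)⟩

lemma coe_prodPermEquivInjective (S : KSubset ι k) (π : Equiv.Perm (Fin k)) :
    (prodPermEquivInjective (S, π) : Fin k → ι) = S.orderEmb ∘ π :=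
  rfl

end KSubset

namespace Matrix

variable {R : Type*} [CommRing R] {ι : Type*} {k : ℕ}

section

variable [Fintype ι]

theorem det_mul_eq_sum_det_submatrix_mul_prod (M : Matrix (Fin k) ι R) (N : Matrix ι (Fin k) R) :
    (M * N).det = ∑ φ : Fin k → ι, (M.submatrix id φ).det * ∏ i, N (φ i) i := by
  simp only [det_apply', mul_apply, prod_univ_sum, mul_sum, sum_mul, Fintype.piFinset_univ,
    submatrix_apply, id, ← prod_mul_distrib, mul_assoc]
  exact sum_comm

end

variable [LinearOrder ι]

noncomputable def compound (k : ℕ) (A : Matrix ι ι R) : Matrix (KSubset ι k) (KSubset ι k) R :=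
  fun S T => (A.submatrix S.orderEmb T.orderEmb).det

lemma compound_diagonal (w : ι → R) :
    compound k (diagonal w) = diagonal fun S : KSubset ι k => ∏ i ∈ S.1, w i := by
  ext S T
  by_cases hST : S = T
  · subst hST
    rw [compound, submatrix_diagonal _ _ S.orderEmb.injective, det_diagonal, diagonal_apply_eq]
    exact S.prod_orderEmb w
  · obtain ⟨i, hiS, hiT⟩ := not_subset.mp fun h =>
      hST (Subtype.ext (eq_of_subset_of_card_le h (by rw [S.2, T.2])))
    obtain ⟨j, rfl⟩ := S.exists_orderEmb_eq hiS
    rw [diagonal_apply_ne _ hST, compound]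
    refine det_eq_zero_of_row_eq_zero j fun l => diagonal_apply_ne _ fun h => hiT ?_
    exact h ▸ T.orderEmb_mem l

lemma compound_one : compound k (1 : Matrix ι ι R) = 1 := by
  rw [← diagonal_one, compound_diagonal]
  simp only [prod_const_one, diagonal_one]

lemma compound_conjTranspose [StarRing R] (A : Matrix ι ι R) :
    compound k Aᴴ = (compound k A)ᴴ := by
  ext S T
  rw [compound, ← conjTranspose_submatrix, det_conjTranspose]
  rfl

variable [Fintype ι]

theorem det_mul_cauchyBinet (M : Matrix (Fin k) ι R) (N : Matrix ι (Fin k) R) :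
    (M * N).det =
      ∑ S : KSubset ι k, (M.submatrix id S.orderEmb).det * (N.submatrix S.orderEmb id).det := by
  classical
  rw [det_mul_eq_sum_det_submatrix_mul_prod]
  have h_noninj : ∀ φ : Fin k → ι, ¬ Function.Injective φ →
      (M.submatrix id φ).det * ∏ i, N (φ i) i = 0 := by
    intro φ hφ
    obtain ⟨a, b, hab, hne⟩ := Function.not_injective_iff.mp hφ
    rw [det_zero_of_column_eq hne fun l => by simp [hab], zero_mul]
  rw [← Fintype.sum_subtype_add_sum_subtype Function.Injective,
    sum_eq_zero fun (φ : {φ // ¬ Function.Injective φ}) _ => h_noninj φ φ.2, add_zero,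
    ← KSubset.prodPermEquivInjective.sum_comp, Fintype.sum_prod_type]
  refine sum_congr rfl fun S _ => ?_
  rw [det_apply' (N.submatrix _ _), mul_sum]
  refine sum_congr rfl fun π _ => ?_
  have hperm : M.submatrix id (S.orderEmb ∘ π) = (M.submatrix id S.orderEmb).submatrix id π := rfl
  rw [KSubset.coe_prodPermEquivInjective, hperm, det_permute']
  simp only [submatrix_apply, id, Function.comp_apply]
  ring

lemma compound_mul (A B : Matrix ι ι R) : compound k (A * B) = compound k A * compound k B := by
  ext S T
  rw [compound, submatrix_mul _ _ _ id _ Function.bijective_id, det_mul_cauchyBinet]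
  rfl

lemma compound_mem_unitaryGroup [StarRing R] {U : Matrix ι ι R} (hU : U ∈ unitaryGroup ι R) :
    compound k U ∈ unitaryGroup (KSubset ι k) R := by
  rw [mem_unitaryGroup_iff, star_eq_conjTranspose, ← compound_conjTranspose, ← compound_mul,
    ← star_eq_conjTranspose, mem_unitaryGroup_iff.mp hU, compound_one]

section L2

open scoped Matrix.Norms.L2Operator

lemma norm_compound_of_isHermitian {S : Matrix ι ι ℝ} (hS : S.IsHermitian) :
    ‖compound k S‖ = ‖fun T : KSubset ι k => ∏ i ∈ T.1, hS.eigenvalues i‖ := by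
  let W : unitary (Matrix (KSubset ι k) (KSubset ι k) ℝ) :=
    ⟨compound k hS.eigenvectorUnitary, compound_mem_unitaryGroup hS.eigenvectorUnitary.2⟩
  have hS' : compound k S = W * compound k (diagonal hS.eigenvalues) * (star W : unitary _) := by
    conv_lhs => rw [hS.spectral_theorem]
    rw [Unitary.conjStarAlgAut_apply, compound_mul, compound_mul, Unitary.coe_star,
      star_eq_conjTranspose, compound_conjTranspose, ← star_eq_conjTranspose]
    rfl
  rw [hS', CStarRing.norm_mul_coe_unitary, CStarRing.norm_coe_unitary_mul, compound_diagonal,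
    l2_opNorm_diagonal]

end L2

end Matrix

lemma Tuple.antitone_comp_sort_neg {n : ℕ} {α : Type*} [AddCommGroup α] [LinearOrder α]
    [IsOrderedAddMonoid α] (f : Fin n → α) : Antitone (f ∘ Tuple.sort fun j => -f j) :=
  fun _ _ hij => neg_le_neg_iff.mp (Tuple.monotone_sort (fun j => -f j) hij)

section SingularValues

open scoped Matrix.Norms.L2Operator

variable {d k : ℕ}

lemma prod_le_prod_filter_val_lt_of_antitone {ν : Fin d → ℝ} (h0 : ∀ i, 0 ≤ ν i)
    (hν : Antitone ν) (T : KSubset (Fin d) k) :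
    ∏ i ∈ T.1, ν i ≤ ∏ i ∈ {i : Fin d | (i : ℕ) < k}, ν i := by
  have hk : k ≤ d := T.2 ▸ (card_le_univ T.1).trans_eq (Fintype.card_fin d)
  have hinit : ∏ i ∈ {i : Fin d | (i : ℕ) < k}, ν i = ∏ j : Fin k, ν (Fin.castLE hk j) := by
    rw [← prod_image fun a _ b _ h => Fin.castLE_injective hk h]
    congr
    ext i
    simp only [mem_filter, mem_univ, true_and, mem_image]
    exact ⟨fun h => ⟨⟨i, h⟩, rfl⟩, by rintro ⟨j, rfl⟩; exact j.2⟩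
  rw [← T.prod_orderEmb, hinit]
  exact prod_le_prod (fun j _ => h0 _) fun j _ => hν (T.val_le_orderEmb j)

lemma pi_norm_prod_kSubset_eq {μ : Fin d → ℝ} (σ : Equiv.Perm (Fin d)) (h0 : ∀ i, 0 ≤ μ i)
    (hμσ : Antitone (μ ∘ σ)) (hk : k ≤ d) :
    ‖fun T : KSubset (Fin d) k => ∏ i ∈ T.1, μ i‖ = ∏ i ∈ {i : Fin d | (i : ℕ) < k}, μ (σ i) := by
  have hprod_nonneg (T : Finset (Fin d)) : 0 ≤ ∏ i ∈ T, μ i := prod_nonneg fun i _ => h0 i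
  apply le_antisymm
  · refine (pi_norm_le_iff_of_nonneg (prod_nonneg fun i _ => h0 _)).2 fun T => ?_
    rw [Real.norm_of_nonneg (hprod_nonneg T.1)]
    have hT : ∏ i ∈ T.1, μ i = ∏ i ∈ T.1.map σ.symm.toEmbedding, μ (σ i) := by simp [prod_map]
    rw [hT]
    exact prod_le_prod_filter_val_lt_of_antitone (fun i => h0 _) hμσ
      ⟨T.1.map σ.symm.toEmbedding, by rw [card_map, T.2]⟩
  · let T₀ : KSubset (Fin d) k :=
      ⟨({i | (i : ℕ) < k} : Finset (Fin d)).map σ.toEmbedding, by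
        rw [card_map, Fin.card_filter_val_lt, min_eq_right hk]⟩
    calc ∏ i ∈ {i : Fin d | (i : ℕ) < k}, μ (σ i) = ‖∏ i ∈ T₀.1, μ i‖ := by
          rw [Real.norm_of_nonneg (hprod_nonneg _), prod_map]
          rfl
      _ ≤ _ := norm_le_pi_norm (fun T : KSubset (Fin d) k => ∏ i ∈ T.1, μ i) T₀

lemma singularValues_nonneg (A : Matrix (Fin d) (Fin d) ℝ) (i : Fin d) : 0 ≤ singularValues A i :=
  Real.sqrt_nonneg _

noncomputable def singularValueProd (k : ℕ) (A : Matrix (Fin d) (Fin d) ℝ) : ℝ :=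
  ∏ i ∈ {i : Fin d | (i : ℕ) < k}, singularValues A i

lemma singularValueProd_nonneg (k : ℕ) (A : Matrix (Fin d) (Fin d) ℝ) :
    0 ≤ singularValueProd k A :=
  prod_nonneg fun i _ => singularValues_nonneg A i

lemma singularValueProd_eq_norm_compound (hk : k ≤ d) (A : Matrix (Fin d) (Fin d) ℝ) :
    singularValueProd k A = ‖compound k A‖ := by
  let hS := isHermitian_iff_isSymm.mpr (isSymm_transpose_mul_self A)
  have hsq : ‖compound k A‖ * ‖compound k A‖ =
      ∏ i ∈ {i : Fin d | (i : ℕ) < k},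
        hS.eigenvalues (Tuple.sort (fun j => -hS.eigenvalues j) i) := by
    rw [← l2_opNorm_conjTranspose_mul_self, ← compound_conjTranspose, ← compound_mul,
      conjTranspose_eq_transpose_of_trivial, norm_compound_of_isHermitian hS]
    exact pi_norm_prod_kSubset_eq _ (posSemidef_conjTranspose_mul_self A).eigenvalues_nonneg
      (Tuple.antitone_comp_sort_neg _) hk
  rw [← mul_self_inj (singularValueProd_nonneg k A) (norm_nonneg _), hsq, singularValueProd,
    ← prod_mul_distrib]
  exact prod_congr rfl fun i _ =>
    Real.mul_self_sqrt ((posSemidef_conjTranspose_mul_self A).eigenvalues_nonneg _)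

lemma singularValueProd_mul_le (hk : k ≤ d) (A B : Matrix (Fin d) (Fin d) ℝ) :
    singularValueProd k (A * B) ≤ singularValueProd k A * singularValueProd k B := by
  simp only [singularValueProd_eq_norm_compound hk, compound_mul]
  exact norm_mul_le _ _

lemma singularValueProd_succ (hk : k < d) (A : Matrix (Fin d) (Fin d) ℝ) :
    singularValueProd (k + 1) A = singularValueProd k A * singularValues A ⟨k, hk⟩ := by
  have hinsert : ({i : Fin d | (i : ℕ) < k + 1} : Finset _) =
      insert ⟨k, hk⟩ ({i : Fin d | (i : ℕ) < k} : Finset _) := by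
    ext i
    simp only [mem_filter, mem_univ, true_and, mem_insert, Fin.ext_iff]
    omega
  rw [singularValueProd, hinsert, prod_insert (by simp), mul_comm]
  rfl

end SingularValues

lemma svf_eq_singularValueProd_mul {d : ℕ} {s : ℝ} (hs : 0 ≤ s) (hsd : s < d)
    (A : Matrix (Fin d) (Fin d) ℝ) :
    svf A s = singularValueProd ⌊s⌋₊ A *
      singularValues A ⟨⌊s⌋₊, (Nat.floor_lt hs).2 hsd⟩ ^ Int.fract s := by
  rw [svf, if_pos hsd, Int.self_sub_floor, ← Int.natCast_floor_eq_floor hs, singularValueProd,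
    prod_filter, ← Fintype.prod_ite_eq' (⟨⌊s⌋₊, (Nat.floor_lt hs).2 hsd⟩ : Fin d)
      (fun i => singularValues A i ^ Int.fract s), ← prod_mul_distrib]
  refine prod_congr rfl fun i _ => ?_
  simp only [Fin.ext_iff, Nat.cast_lt, Nat.cast_inj]
  split_ifs <;> first | simp | omega

lemma svf_eq_interpolate {d : ℕ} {s : ℝ} (hs : 0 ≤ s) (hsd : s < d)
    (A : Matrix (Fin d) (Fin d) ℝ) :
    svf A s = singularValueProd ⌊s⌋₊ A ^ (1 - Int.fract s) *
      singularValueProd (⌊s⌋₊ + 1) A ^ Int.fract s := by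
  have hP := singularValueProd_nonneg ⌊s⌋₊ A
  rw [svf_eq_singularValueProd_mul hs hsd, singularValueProd_succ,
    Real.mul_rpow hP (singularValues_nonneg A _), ← mul_assoc, ← Real.rpow_add' hP (by norm_num), sub_add_cancel, Real.rpow_one]

theorem stmt12 {d : ℕ} (s : ℝ) (hs : 0 ≤ s) (A B : Matrix (Fin d) (Fin d) ℝ) :
    svf (A * B) s ≤ svf A s * svf B s := by
  by_cases hsd : s < d
  · have hk : ⌊s⌋₊ < d := (Nat.floor_lt hs).2 hsd
    have hθ₀ : 0 ≤ Int.fract s := Int.fract_nonneg s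
    have hθ₁ : 0 ≤ 1 - Int.fract s := sub_nonneg.2 (Int.fract_lt_one s).le
    have hP := singularValueProd_nonneg (d := d)
    simp only [svf_eq_interpolate hs hsd]
    calc _ ≤ (singularValueProd ⌊s⌋₊ A * singularValueProd ⌊s⌋₊ B) ^ (1 - Int.fract s) *
          (singularValueProd (⌊s⌋₊ + 1) A * singularValueProd (⌊s⌋₊ + 1) B) ^ Int.fract s :=
          mul_le_mul (Real.rpow_le_rpow (hP _ _) (singularValueProd_mul_le hk.le A B) hθ₁)
            (Real.rpow_le_rpow (hP _ _) (singularValueProd_mul_le hk A B) hθ₀)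
            (Real.rpow_nonneg (hP _ _) _) (Real.rpow_nonneg (mul_nonneg (hP _ _) (hP _ _)) _)
      _ = _ := by
          rw [Real.mul_rpow (hP _ _) (hP _ _), Real.mul_rpow (hP _ _) (hP _ _)]
          ring
  · simp only [svf, if_neg hsd, det_mul, abs_mul, Real.mul_rpow (abs_nonneg _) (abs_nonneg _),
      le_refl]
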